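/- Let G be a bigraph with E₂ = (E₁ ∩ E₁ᵀ) \ Δ. Then two permissible reduced words w = v₁...v_m and w' = v₁'...v_m' are equivalent if and only if they have the same set of letters: {v₁,...,v_m} = {v₁',...,v_m'}. -/

import Mathlib

/-- A bigraph: two edge sets on a common vertex set, `E1` reflexive,
`E2` irreflexive and symmetric. -/
structure Bigraph (V : Type) where
  E1 : Set (V × V)
  E2 : Set (V × V)
  refl1 : ∀ v : V, (v, v) ∈ E1
  irrefl2 : ∀ v : V, (v, v) ∉ E2
  symm2 : ∀ v w : V, (v, w) ∈ E2 → (w, v) ∈ E2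

/-- `a` and `b` are in tensor relation: `(a,b) ∈ E₂ ∩ E₁ ∩ E₁ᵀ`. -/
def Tensor {V : Type} (G : Bigraph V) (a b : V) : Prop :=
  (a, b) ∈ G.E2 ∧ (a, b) ∈ G.E1 ∧ (b, a) ∈ G.E1

/-- Elementary swap of two consecutive letters in tensor relation. -/
def Swap {V : Type} (G : Bigraph V) (w w' : List V) : Prop :=
  ∃ (l1 l2 : List V) (a b : V), Tensor G a b ∧
    w = l1 ++ a :: b :: l2 ∧ w' = l1 ++ b :: a :: l2

/-- Equivalence of words: the reflexive-transitive closure of elementary swaps. -/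
def WordEquiv {V : Type} (G : Bigraph V) : List V → List V → Prop :=
  Relation.ReflTransGen (Swap G)

/-- A word `v₁ ⋯ v_k` is permissible if `(v_{i₂}, v_{i₁}) ∈ E₁` whenever `i₁ < i₂`. -/
def Permissible {V : Type} (G : Bigraph V) (w : List V) : Prop :=
  ∀ i j : Fin w.length, (i : ℕ) < (j : ℕ) → (w.get j, w.get i) ∈ G.E1

/-- A word is reduced if any two equal letters are separated by a letter different from
them and not in tensor relation with them. -/
def Reduced {V : Type} (G : Bigraph V) (w : List V) : Prop :=
  ∀ i j : Fin w.length, (i : ℕ) < (j : ℕ) → w.get i = w.get j →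
    ∃ l : Fin w.length, (i : ℕ) < (l : ℕ) ∧ (l : ℕ) < (j : ℕ) ∧
      w.get l ≠ w.get i ∧ ¬ Tensor G (w.get i) (w.get l)

section Aux
variable {V : Type} (G : Bigraph V)

lemma swap_perm {w w' : List V} (h : Swap G w w') : w.Perm w' := by
  obtain ⟨l1, l2, a, b, -, rfl, rfl⟩ := h
  exact List.Perm.append_left _ (List.Perm.swap b a l2)

lemma wordEquiv_perm {w w' : List V} (h : WordEquiv G w w') : w.Perm w' := by
  induction h with
  | refl => exact List.Perm.refl _
  | tail _ hs ih => exact ih.trans (swap_perm G hs)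

lemma permissible_iff_pairwise {w : List V} :
    Permissible G w ↔ w.Pairwise (fun x y => (y, x) ∈ G.E1) := by
  rw [List.pairwise_iff_get]
  exact Iff.rfl

lemma nodup_of_red (hE2 : G.E2 = {p : V × V | p ∈ G.E1 ∧ (p.2, p.1) ∈ G.E1 ∧ p.1 ≠ p.2})
    {w : List V} (hp : Permissible G w) (hr : Reduced G w) : w.Nodup := by
  rw [List.nodup_iff_injective_get]
  intro i j hget
  by_contra hij
  have key : ∀ i j : Fin w.length, (i:ℕ) < (j:ℕ) → w.get i = w.get j → False := by
    intro i j hlt heq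
    obtain ⟨l, h1, h2, hne, hnt⟩ := hr i j hlt heq
    refine hnt ⟨?_, ?_, hp i l h1⟩
    · rw [hE2]
      refine ⟨?_, hp i l h1, fun hc => hne hc.symm⟩
      have := hp l j h2
      rwa [← heq] at this
    · have := hp l j h2
      rwa [← heq] at this
  rcases lt_trichotomy (i:ℕ) (j:ℕ) with h | h | h
  · exact key i j h hget
  · exact hij (Fin.ext h)
  · exact key j i h hget.symm

lemma wordEquiv_cons (c : V) {w w' : List V} (h : WordEquiv G w w') :
    WordEquiv G (c :: w) (c :: w') := by
  refine Relation.ReflTransGen.lift (c :: ·) ?_ _ _ h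
  rintro u v ⟨l1, l2, a, b, ht, rfl, rfl⟩
  exact ⟨c :: l1, l2, a, b, ht, rfl, rfl⟩

lemma move_front (a : V) : ∀ l1 l2 : List V, (∀ b ∈ l1, Tensor G b a) →
    WordEquiv G (l1 ++ a :: l2) (a :: (l1 ++ l2)) := by
  intro l1
  induction l1 with
  | nil => intro l2 _; exact Relation.ReflTransGen.refl
  | cons c l1 ih =>
    intro l2 h
    have h1 := ih l2 (fun b hb => h b (List.mem_cons_of_mem _ hb))
    have h2 := wordEquiv_cons G c h1
    have h3 : Swap G (c :: a :: (l1 ++ l2)) (a :: c :: (l1 ++ l2)) :=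
      ⟨[], l1 ++ l2, c, a, h c (List.mem_cons_self), rfl, rfl⟩
    exact Relation.ReflTransGen.tail h2 h3

lemma core (hE2 : G.E2 = {p : V × V | p ∈ G.E1 ∧ (p.2, p.1) ∈ G.E1 ∧ p.1 ≠ p.2}) :
    ∀ w' w : List V, w.Nodup → w'.Nodup →
    w.Pairwise (fun x y => (y, x) ∈ G.E1) → w'.Pairwise (fun x y => (y, x) ∈ G.E1) →
    (∀ x, x ∈ w ↔ x ∈ w') → WordEquiv G w w' := by
  intro w'
  induction w' with
  | nil =>
    intro w _ _ _ _ hmem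
    have : w = [] := List.eq_nil_iff_forall_not_mem.mpr (fun x hx => by simpa using (hmem x).mp hx)
    rw [this]; exact Relation.ReflTransGen.refl
  | cons a t' ih =>
    intro w hnd hnd' hpw hpw' hmem
    have ha : a ∈ w := (hmem a).mpr (List.mem_cons_self)
    obtain ⟨l1, l2, rfl⟩ := List.append_of_mem ha
    have hanl1 : a ∉ l1 := fun hc => (List.disjoint_of_nodup_append hnd) hc (List.mem_cons_self)
    have hanl2 : a ∉ l2 := by
      have := (List.nodup_append'.mp hnd).2.1
      exact (List.nodup_cons.mp this).1
    have hant' : a ∉ t' := (List.nodup_cons.mp hnd').1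
    have hrel := (List.pairwise_append.mp hpw).2.2
    have hrel' := (List.pairwise_cons.mp hpw').1
    have htens : ∀ b ∈ l1, Tensor G b a := by
      intro b hb
      have hba : b ≠ a := fun h => hanl1 (h ▸ hb)
      have hE1ab : (a, b) ∈ G.E1 := hrel b hb a (List.mem_cons_self)
      have hbw : b ∈ a :: t' := (hmem b).mp (List.mem_append_left _ hb)
      have hbt' : b ∈ t' := by
        rcases List.mem_cons.mp hbw with h | h
        · exact absurd h hba
        · exact h
      have hE1ba : (b, a) ∈ G.E1 := hrel' b hbt'
      exact ⟨by rw [hE2]; exact ⟨hE1ba, hE1ab, hba⟩, hE1ba, hE1ab⟩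
    have hsub : (l1 ++ l2).Sublist (l1 ++ a :: l2) :=
      List.Sublist.append_left (List.sublist_cons_self a l2) l1
    have hmem2 : ∀ x, x ∈ l1 ++ l2 ↔ x ∈ t' := by
      intro x
      constructor
      · intro hx
        have hxa : x ≠ a := by
          rintro rfl
          rcases List.mem_append.mp hx with h | h
          · exact hanl1 h
          · exact hanl2 h
        have : x ∈ a :: t' := (hmem x).mp (hsub.mem hx)
        rcases List.mem_cons.mp this with h | h
        · exact absurd h hxa
        · exact h
      · intro hx
        have hxa : x ≠ a := fun h => hant' (h ▸ hx)
        have : x ∈ l1 ++ a :: l2 := (hmem x).mpr (List.mem_cons_of_mem _ hx)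
        rcases List.mem_append.mp this with h | h
        · exact List.mem_append_left _ h
        · rcases List.mem_cons.mp h with h | h
          · exact absurd h hxa
          · exact List.mem_append_right _ h
    have hIH := ih (l1 ++ l2) (hnd.sublist hsub) (List.nodup_cons.mp hnd').2
      (hpw.sublist hsub) (List.pairwise_cons.mp hpw').2 hmem2
    exact (move_front G a l1 l2 htens).trans (wordEquiv_cons G a hIH)

end Aux

/-- If `E₂ = (E₁ ∩ E₁ᵀ) \ Δ`, two permissible reduced words of the same length are
equivalent if and only if they have the same set of letters. -/
theorem wordEquiv_iff_same_letters {V : Type} (G : Bigraph V)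
    (hE2 : G.E2 = {p : V × V | p ∈ G.E1 ∧ (p.2, p.1) ∈ G.E1 ∧ p.1 ≠ p.2})
    (w w' : List V) (hlen : w.length = w'.length)
    (hpw : Permissible G w) (hrw : Reduced G w)
    (hpw' : Permissible G w') (hrw' : Reduced G w') :
    WordEquiv G w w' ↔ ∀ x : V, x ∈ w ↔ x ∈ w' := by
  constructor
  · intro h x
    exact (wordEquiv_perm G h).mem_iff
  · intro h
    exact core G hE2 w' w (nodup_of_red G hE2 hpw hrw) (nodup_of_red G hE2 hpw' hrw')
      ((permissible_iff_pairwise G).mp hpw) ((permissible_iff_pairwise G).mp hpw') h
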